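/- Let δ > 0 be a constant and set μ = (1+δ)^{-1/4}. If the dimension d satisfies d ≥ (1+δ)·2·(log₂ e)·(log₂ n), then the probability that a random instance of two lists of n vectors of dimension d with i.i.d. Bernoulli(μ) bits contains an orthogonal pair is at most n^{2(1 - √(1+δ))}. In particular, since √(1+δ) > 1, there exists a constant ε > 0 (e.g. ε = 2(√(1+δ) - 1)) such that this probability is at most n^{-ε}. -/
import Mathlib

open Finset

private lemma pi_sum_prod' {d : ℕ} {V : Type*} [Fintype V] [DecidableEq V] (h : Fin d → V → ℝ) :
    ∑ v : Fin d → V, ∏ i, h i (v i) = ∏ i, ∑ x, h i x := by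
  rw [Finset.prod_univ_sum, Fintype.piFinset_univ]

private lemma marg' {n : ℕ} {V : Type*} [Fintype V] [DecidableEq V] (q : Fin n) (g φ : V → ℝ)
    (hg : ∑ v, g v = 1) :
    ∑ C : Fin n → V, φ (C q) * ∏ r, g (C r) = ∑ v, φ v * g v := by
  have h1 : ∀ C : Fin n → V, φ (C q) * ∏ r, g (C r)
      = ∏ r, (if r = q then φ (C r) * g (C r) else g (C r)) := by
    intro C
    rw [← Finset.mul_prod_erase univ (fun r => (if r = q then φ (C r) * g (C r) else g (C r))) (mem_univ q),
        ← Finset.mul_prod_erase univ (fun r => g (C r)) (mem_univ q)]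
    rw [if_pos rfl, Finset.prod_congr rfl (fun r hr => if_neg (Finset.mem_erase.mp hr).1)]
    ring
  simp_rw [h1]
  rw [pi_sum_prod' (fun r v => if r = q then φ v * g v else g v)]
  rw [← Finset.mul_prod_erase univ _ (mem_univ q)]
  have h2 : ∀ r ∈ univ.erase q, (∑ x, if r = q then φ x * g x else g x) = 1 := by
    intro r hr
    rw [Finset.sum_congr rfl (fun x _ => if_neg (Finset.mem_erase.mp hr).1), hg]
  rw [Finset.prod_congr rfl h2]
  simp

private lemma union_bound' (n d : ℕ) (μ : ℝ) (hμ0 : 0 ≤ μ) (hμ1 : μ ≤ 1) :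
    ∑ A : Fin n → Fin d → Bool, ∑ C : Fin n → Fin d → Bool,
      (if ∃ p q : Fin n, ∀ i, (A p i && C q i) = false then
        (∏ p, ∏ i, (fun b : Bool => if b then μ else 1 - μ) (A p i)) *
          (∏ q, ∏ i, (fun b : Bool => if b then μ else 1 - μ) (C q i)) else 0)
      ≤ (n : ℝ)^2 * (1 - μ^2)^d := by
  set f : Bool → ℝ := fun b => if b then μ else 1 - μ with hf
  set g : (Fin d → Bool) → ℝ := fun v => ∏ i, f (v i) with hgdef
  have hf0 : ∀ b, 0 ≤ f b := by intro b; cases b <;> simp [f] <;> linarith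
  have hfsum : ∑ b, f b = 1 := by simp [f, Fintype.sum_bool]
  have hg0 : ∀ v, 0 ≤ g v := fun v => Finset.prod_nonneg (fun i _ => hf0 _)
  have hgsum : ∑ v, g v = 1 := by
    rw [hgdef, pi_sum_prod' (fun _ b => f b)]
    simp only [hfsum, Finset.prod_const_one]
  set W : (Fin n → Fin d → Bool) → ℝ := fun A => ∏ p, g (A p) with hWdef
  have hW0 : ∀ A, 0 ≤ W A := fun A => Finset.prod_nonneg (fun p _ => hg0 _)
  have hre : (∑ A : Fin n → Fin d → Bool, ∑ C : Fin n → Fin d → Bool,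
      (if ∃ p q : Fin n, ∀ i, (A p i && C q i) = false then
        (∏ p, ∏ i, f (A p i)) * (∏ q, ∏ i, f (C q i)) else 0))
      = ∑ A : Fin n → Fin d → Bool, ∑ C : Fin n → Fin d → Bool,
        (if ∃ p q : Fin n, ∀ i, (A p i && C q i) = false then W A * W C else 0) := rfl
  rw [hre]
  have step1 : ∀ A C : Fin n → Fin d → Bool,
      (if ∃ p q : Fin n, ∀ i, (A p i && C q i) = false then W A * W C else 0)
      ≤ ∑ p : Fin n, ∑ q : Fin n,
          (if ∀ i, (A p i && C q i) = false then W A * W C else 0) := by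
    intro A C
    have hnn : ∀ p q : Fin n, 0 ≤ (if ∀ i, (A p i && C q i) = false then W A * W C else 0) := by
      intro p q; split_ifs
      · exact mul_nonneg (hW0 A) (hW0 C)
      · exact le_rfl
    by_cases h : ∃ p q : Fin n, ∀ i, (A p i && C q i) = false
    · obtain ⟨p, q, hpq⟩ := h
      rw [if_pos ⟨p, q, hpq⟩]
      calc W A * W C = (if ∀ i, (A p i && C q i) = false then W A * W C else 0) := by
              rw [if_pos hpq]
        _ ≤ ∑ q' : Fin n, (if ∀ i, (A p i && C q' i) = false then W A * W C else 0) :=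
              Finset.single_le_sum (fun q' _ => hnn p q') (mem_univ q)
        _ ≤ ∑ p' : Fin n, ∑ q' : Fin n, (if ∀ i, (A p' i && C q' i) = false then W A * W C else 0) :=
              Finset.single_le_sum (fun p' _ => Finset.sum_nonneg (fun q' _ => hnn p' q')) (mem_univ p)
    · rw [if_neg h]
      exact Finset.sum_nonneg (fun p _ => Finset.sum_nonneg (fun q _ => hnn p q))
  have step1' := Finset.sum_le_sum (fun A (_ : A ∈ univ) =>
    Finset.sum_le_sum (fun C (_ : C ∈ univ) => step1 A C))
  refine le_trans step1' ?_
  have swap : (∑ A : Fin n → Fin d → Bool, ∑ C : Fin n → Fin d → Bool, ∑ p : Fin n, ∑ q : Fin n,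
      (if ∀ i, (A p i && C q i) = false then W A * W C else 0))
      = ∑ p : Fin n, ∑ q : Fin n, ∑ A : Fin n → Fin d → Bool, ∑ C : Fin n → Fin d → Bool,
      (if ∀ i, (A p i && C q i) = false then W A * W C else 0) := by
    calc (∑ A : Fin n → Fin d → Bool, ∑ C : Fin n → Fin d → Bool, ∑ p : Fin n, ∑ q : Fin n,
        (if ∀ i, (A p i && C q i) = false then W A * W C else 0))
        = ∑ A : Fin n → Fin d → Bool, ∑ p : Fin n, ∑ C : Fin n → Fin d → Bool, ∑ q : Fin n,
          (if ∀ i, (A p i && C q i) = false then W A * W C else 0) :=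
        Finset.sum_congr rfl (fun A _ => Finset.sum_comm)
      _ = ∑ p : Fin n, ∑ A : Fin n → Fin d → Bool, ∑ C : Fin n → Fin d → Bool, ∑ q : Fin n,
          (if ∀ i, (A p i && C q i) = false then W A * W C else 0) := Finset.sum_comm
      _ = ∑ p : Fin n, ∑ A : Fin n → Fin d → Bool, ∑ q : Fin n, ∑ C : Fin n → Fin d → Bool,
          (if ∀ i, (A p i && C q i) = false then W A * W C else 0) :=
        Finset.sum_congr rfl (fun p _ => Finset.sum_congr rfl (fun A _ => Finset.sum_comm))
      _ = ∑ p : Fin n, ∑ q : Fin n, ∑ A : Fin n → Fin d → Bool, ∑ C : Fin n → Fin d → Bool,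
          (if ∀ i, (A p i && C q i) = false then W A * W C else 0) :=
        Finset.sum_congr rfl (fun p _ => Finset.sum_comm)
  rw [swap]
  have pairG : ∀ (u v : Fin d → Bool),
      (if ∀ i, (u i && v i) = false then g v * g u else 0)
      = ∏ i, (if (u i && v i) = false then f (u i) * f (v i) else 0) := by
    intro u v
    by_cases h : ∀ i, (u i && v i) = false
    · rw [if_pos h, Finset.prod_congr rfl (fun i _ => if_pos (h i))]
      rw [Finset.prod_mul_distrib]
      rw [hgdef]; ring
    · push_neg at h
      obtain ⟨i, hi⟩ := h
      rw [if_neg (by push_neg; exact ⟨i, hi⟩)]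
      symm
      apply Finset.prod_eq_zero (mem_univ i)
      exact if_neg hi
  have step3 : ∀ p q : Fin n,
      (∑ A : Fin n → Fin d → Bool, ∑ C : Fin n → Fin d → Bool,
        (if ∀ i, (A p i && C q i) = false then W A * W C else 0)) = (1 - μ^2)^d := by
    intro p q
    have inner : ∀ A : Fin n → Fin d → Bool,
        (∑ C : Fin n → Fin d → Bool, (if ∀ i, (A p i && C q i) = false then W A * W C else 0))
        = (∑ v : Fin d → Bool, (if ∀ i, (A p i && v i) = false then W A * g v else 0)) := by
      intro A
      have e1 : ∀ C : Fin n → Fin d → Bool,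
          (if ∀ i, (A p i && C q i) = false then W A * W C else 0)
          = (fun v => if ∀ i, (A p i && v i) = false then W A else 0) (C q) * ∏ r, g (C r) := by
        intro C
        simp only [hWdef]
        split_ifs <;> ring
      rw [Finset.sum_congr rfl (fun C _ => e1 C),
          marg' q g (fun v => if ∀ i, (A p i && v i) = false then W A else 0) hgsum]
      refine Finset.sum_congr rfl (fun v _ => ?_)
      split_ifs <;> ring
    rw [Finset.sum_congr rfl (fun A _ => inner A)]
    have e2 : ∀ A : Fin n → Fin d → Bool,
        (∑ v : Fin d → Bool, (if ∀ i, (A p i && v i) = false then W A * g v else 0))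
        = (fun u => ∑ v : Fin d → Bool, (if ∀ i, (u i && v i) = false then g v else 0)) (A p)
            * ∏ r, g (A r) := by
      intro A
      simp only [hWdef]
      rw [Finset.sum_mul]
      refine Finset.sum_congr rfl (fun v _ => ?_)
      split_ifs <;> ring
    rw [Finset.sum_congr rfl (fun A _ => e2 A),
        marg' p g (fun u => ∑ v : Fin d → Bool, (if ∀ i, (u i && v i) = false then g v else 0)) hgsum]
    have e3 : ∀ u : Fin d → Bool,
        (∑ v : Fin d → Bool, (if ∀ i, (u i && v i) = false then g v else 0)) * g u
        = ∑ v : Fin d → Bool, ∏ i, (if (u i && v i) = false then f (u i) * f (v i) else 0) := by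
      intro u
      rw [Finset.sum_mul]
      refine Finset.sum_congr rfl (fun v _ => ?_)
      rw [← pairG u v]
      split_ifs <;> ring
    rw [Finset.sum_congr rfl (fun u _ => e3 u)]
    have e4 : ∀ u : Fin d → Bool,
        (∑ v : Fin d → Bool, ∏ i, (if (u i && v i) = false then f (u i) * f (v i) else 0))
        = ∏ i, (fun a => ∑ b : Bool, (if (a && b) = false then f a * f b else 0)) (u i) := by
      intro u
      rw [pi_sum_prod' (fun i b => if (u i && b) = false then f (u i) * f b else 0)]
    rw [Finset.sum_congr rfl (fun u _ => e4 u),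
        pi_sum_prod' (fun i a => ∑ b : Bool, (if (a && b) = false then f a * f b else 0))]
    have e5 : (∑ a : Bool, ∑ b : Bool, (if (a && b) = false then f a * f b else 0)) = 1 - μ^2 := by
      simp [Fintype.sum_bool, f]
      ring
    rw [Finset.prod_congr rfl (fun i _ => e5)]
    simp
  rw [Finset.sum_congr rfl (fun p _ => Finset.sum_congr rfl (fun q _ => step3 p q))]
  simp [Finset.sum_const, Finset.card_univ]
  ring_nf
  exact le_rfl

private lemma analytic' (n d : ℕ) (δ : ℝ) (hδ : 0 < δ) (hn : 1 ≤ n)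
    (hd : (1 + δ) * 2 * Real.logb 2 (Real.exp 1) * Real.logb 2 n ≤ (d : ℝ)) :
    (n : ℝ)^2 * (1 - ((1 + δ) ^ (-(1:ℝ)/4))^2)^d ≤ (n : ℝ) ^ (2 * (1 - Real.sqrt (1 + δ))) := by
  set μ : ℝ := (1 + δ) ^ (-(1:ℝ)/4) with hμdef
  have h1 : (0:ℝ) < 1 + δ := by linarith
  set s : ℝ := Real.sqrt (1 + δ) with hsdef
  have hs2 : s ^ 2 = 1 + δ := Real.sq_sqrt h1.le
  have hs1 : 1 < s := by
    have h := Real.sqrt_lt_sqrt (by norm_num : (0:ℝ) ≤ 1) (by linarith : (1:ℝ) < 1 + δ)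
    simpa using h
  have hs0 : 0 < s := by linarith
  have hμpos : 0 < μ := Real.rpow_pos_of_pos h1 _
  have hμsq : μ ^ 2 = s⁻¹ := by
    rw [hμdef, ← Real.rpow_natCast ((1+δ) ^ (-(1:ℝ)/4)) 2, ← Real.rpow_mul h1.le]
    rw [hsdef, Real.sqrt_eq_rpow, ← Real.rpow_neg h1.le]
    norm_num
  have hμ1 : μ ^ 2 ≤ 1 := by
    rw [hμsq]
    rw [inv_le_one_iff₀]
    right; linarith
  have hnpos : (0:ℝ) < n := by exact_mod_cast hn
  have hlogn : 0 ≤ Real.log n := Real.log_nonneg (by exact_mod_cast hn)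
  have hL : Real.logb 2 (Real.exp 1) = 1 / Real.log 2 := by
    rw [Real.logb, Real.log_exp]
  have hL2 : 0 < Real.log 2 := Real.log_pos (by norm_num)
  have hL1 : Real.log 2 < 1 := by
    have := Real.log_two_lt_d9; linarith
  have hdd : 2 * (1 + δ) * Real.log n ≤ (d:ℝ) := by
    rw [hL, Real.logb] at hd
    have h2 : (1 + δ) * 2 * (1 / Real.log 2) * (Real.log n / Real.log 2)
        = 2 * (1 + δ) * Real.log n / (Real.log 2)^2 := by ring
    rw [h2] at hd
    have h3 : 2 * (1 + δ) * Real.log n ≤ 2 * (1 + δ) * Real.log n / (Real.log 2)^2 := by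
      rw [le_div_iff₀ (by positivity)]
      have hsq : (Real.log 2)^2 ≤ 1 := by nlinarith
      have hx : 0 ≤ 2*(1+δ)*Real.log n := mul_nonneg (by linarith) hlogn
      exact mul_le_of_le_one_right hx hsq
    linarith
  have key : 2 * s * Real.log n ≤ μ ^ 2 * d := by
    have hprod : μ ^ 2 * s = 1 := by rw [hμsq]; field_simp
    nlinarith [mul_nonneg (mul_nonneg (le_of_lt hμpos) (le_of_lt hμpos))
      (sub_nonneg.mpr hdd), sq_nonneg μ]
  have c1 : (1 - μ^2)^d ≤ Real.exp (-(μ^2 * d)) := by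
    calc (1 - μ^2)^d ≤ (Real.exp (-μ^2))^d := by
          apply pow_le_pow_left₀ (by linarith)
          have := Real.add_one_le_exp (-μ^2); linarith
      _ = Real.exp (-(μ^2 * d)) := by
          rw [← Real.exp_nat_mul]; ring_nf
  have c2 : Real.exp (-(μ^2 * d)) ≤ (n:ℝ) ^ (-(2*s)) := by
    rw [Real.rpow_def_of_pos hnpos]
    apply Real.exp_le_exp.mpr
    nlinarith [key]
  calc (n : ℝ)^2 * (1 - μ^2)^d ≤ (n : ℝ)^2 * ((n:ℝ) ^ (-(2*s))) := by
        apply mul_le_mul_of_nonneg_left (le_trans c1 c2) (by positivity)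
    _ = (n:ℝ) ^ (2 * (1 - s)) := by
        rw [← Real.rpow_natCast (n:ℝ) 2, ← Real.rpow_add hnpos]
        norm_num; ring_nf

/-- Let `δ > 0` and `μ = (1+δ)^{-1/4}`.  If the dimension satisfies
`d ≥ (1+δ)·2·log₂(e)·log₂(n)`, then the probability that a random instance of
two lists of `n` vectors of dimension `d` with i.i.d. Bernoulli(μ) bits contains
an orthogonal pair is at most `n^{2(1-√(1+δ))}`; in particular there is an
`ε > 0` (e.g. `ε = 2(√(1+δ)-1)`) such that this probability is at most `n^{-ε}`. -/
theorem stmt_8 (n d : ℕ) (δ : ℝ) (hδ : 0 < δ)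
    (hd : (1 + δ) * 2 * Real.logb 2 (Real.exp 1) * Real.logb 2 n ≤ (d : ℝ)) :
    (∑ A : Fin n → Fin d → Bool, ∑ C : Fin n → Fin d → Bool,
      (if ∃ p q : Fin n, ∀ i, (A p i && C q i) = false then
        (∏ p, ∏ i, (if A p i then ((1 + δ) ^ (-(1:ℝ)/4) : ℝ)
            else 1 - (1 + δ) ^ (-(1:ℝ)/4))) *
          (∏ q, ∏ i, (if C q i then ((1 + δ) ^ (-(1:ℝ)/4) : ℝ)
            else 1 - (1 + δ) ^ (-(1:ℝ)/4)))
      else 0))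
      ≤ (n : ℝ) ^ (2 * (1 - Real.sqrt (1 + δ))) ∧
    ∃ ε : ℝ, 0 < ε ∧
      (∑ A : Fin n → Fin d → Bool, ∑ C : Fin n → Fin d → Bool,
        (if ∃ p q : Fin n, ∀ i, (A p i && C q i) = false then
          (∏ p, ∏ i, (if A p i then ((1 + δ) ^ (-(1:ℝ)/4) : ℝ)
              else 1 - (1 + δ) ^ (-(1:ℝ)/4))) *
            (∏ q, ∏ i, (if C q i then ((1 + δ) ^ (-(1:ℝ)/4) : ℝ)
              else 1 - (1 + δ) ^ (-(1:ℝ)/4)))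
        else 0))
        ≤ (n : ℝ) ^ (-ε) := by
  have h1 : (0:ℝ) < 1 + δ := by linarith
  have hs1 : 1 < Real.sqrt (1 + δ) := by
    have h := Real.sqrt_lt_sqrt (by norm_num : (0:ℝ) ≤ 1) (by linarith : (1:ℝ) < 1 + δ)
    simpa using h
  have hμ0 : 0 ≤ (1 + δ) ^ (-(1:ℝ)/4) := (Real.rpow_pos_of_pos h1 _).le
  have hμ1 : (1 + δ) ^ (-(1:ℝ)/4) ≤ 1 :=
    Real.rpow_le_one_of_one_le_of_nonpos (by linarith) (by norm_num)
  have main : (∑ A : Fin n → Fin d → Bool, ∑ C : Fin n → Fin d → Bool,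
      (if ∃ p q : Fin n, ∀ i, (A p i && C q i) = false then
        (∏ p, ∏ i, (if A p i then ((1 + δ) ^ (-(1:ℝ)/4) : ℝ)
            else 1 - (1 + δ) ^ (-(1:ℝ)/4))) *
          (∏ q, ∏ i, (if C q i then ((1 + δ) ^ (-(1:ℝ)/4) : ℝ)
            else 1 - (1 + δ) ^ (-(1:ℝ)/4)))
      else 0))
      ≤ (n : ℝ) ^ (2 * (1 - Real.sqrt (1 + δ))) := by
    rcases Nat.eq_zero_or_pos n with hn | hn
    · subst hn
      have hz : (∑ A : Fin 0 → Fin d → Bool, ∑ C : Fin 0 → Fin d → Bool,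
          (if ∃ p q : Fin 0, ∀ i, (A p i && C q i) = false then
            (∏ p, ∏ i, (if A p i then ((1 + δ) ^ (-(1:ℝ)/4) : ℝ)
                else 1 - (1 + δ) ^ (-(1:ℝ)/4))) *
              (∏ q, ∏ i, (if C q i then ((1 + δ) ^ (-(1:ℝ)/4) : ℝ)
                else 1 - (1 + δ) ^ (-(1:ℝ)/4)))
          else 0)) = 0 := by simp
      rw [hz]
      exact Real.rpow_nonneg (by norm_num) _
    · exact le_trans (union_bound' n d ((1 + δ) ^ (-(1:ℝ)/4)) hμ0 hμ1)
        (analytic' n d δ hδ hn hd)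
  refine ⟨main, 2 * (Real.sqrt (1 + δ) - 1), by linarith, ?_⟩
  have he : -(2 * (Real.sqrt (1 + δ) - 1)) = 2 * (1 - Real.sqrt (1 + δ)) := by ring
  rw [he]
  exact main
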